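/- Let μ be the uniform distribution over a finite set X of size n ≥ 1. Then for all ε ∈ (0, 1/e), log N_{μ,[−1,1]^X}([−1,1]^X, ε) ≥ n · log(1/(eε)), where e is the base of the natural logarithm. -/

import Mathlib

open scoped ENNReal Pointwise

noncomputable section

namespace OI

/-- Expectation of a real-valued function under a probability mass function. -/
def pexp {α : Type*} (q : PMF α) (f : α → ℝ) : ℝ := ∑' a, (q a).toReal * f a

/-- Inner product of two functions w.r.t. the distribution `μ`. -/
def inn {X : Type*} (μ : PMF X) (f g : X → ℝ) : ℝ := pexp μ fun x => f x * g x

/-- Dual Minkowski (semi)norm of `f` w.r.t. the class `F`. -/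
def dnorm {X : Type*} (μ : PMF X) (F : Set (X → ℝ)) (f : X → ℝ) : ℝ :=
  sSup ((fun g => |inn μ f g|) '' F)

/-- `C` is an ε-covering of `G` w.r.t. the seminorm defined by `F`. -/
def IsCover {X : Type*} (μ : PMF X) (F G : Set (X → ℝ)) (ε : ℝ) (C : Set (X → ℝ)) : Prop :=
  C ⊆ G ∧ ∀ g ∈ G, ∃ c ∈ C, dnorm μ F (g - c) ≤ ε

/-- Covering number `N_{μ,F}(G, ε)` (`⊤` if no finite covering exists). -/
def covN {X : Type*} (μ : PMF X) (F G : Set (X → ℝ)) (ε : ℝ) : ℕ∞ :=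
  ⨅ (C : Set (X → ℝ)) (_ : IsCover μ F G ε C), C.encard

/-- Base-2 logarithm of an extended natural number (junk value on `⊤`). -/
def elog2 (N : ℕ∞) : ℝ := Real.logb 2 (N.toNat : ℝ)

/-- Bernoulli distribution on `Bool` with mean (the truncation to `[0,1]` of) `r`. -/
def bern (r : ℝ) : PMF Bool := PMF.bernoulli (min (Real.toNNReal r) 1) (min_le_right _ _)

/-- The distribution `μ_p` of individual-outcome pairs. -/
def exDist {X : Type*} (μ : PMF X) (p : X → ℝ) : PMF (X × Bool) :=
  μ.bind fun x => (bern (p x)).map fun o => (x, o)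

/-- `n` i.i.d. samples from `q`. -/
def iid {α : Type*} (q : PMF α) : (n : ℕ) → PMF (Fin n → α)
  | 0 => PMF.pure Fin.elim0
  | n + 1 => (iid q n).bind fun v => q.map fun a => Fin.cons a v

/-- Probability of an event under a PMF. -/
def prob {α : Type*} (q : PMF α) (E : Set α) : ℝ≥0∞ := q.toOuterMeasure E

/-- A (possibly randomized) `n`-sample learner. -/
abbrev Learner (X : Type*) (n : ℕ) := (Fin n → X × Bool) → PMF (X → ℝ)

/-- Distribution of the learner output on `n` i.i.d. samples from `μ_{p*}`. -/
def outDist {X : Type*} (μ : PMF X) (pstar : X → ℝ) {n : ℕ} (A : Learner X n) :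
    PMF (X → ℝ) :=
  (iid (exDist μ pstar) n).bind A

/-- `p` is a predictor, i.e. takes values in `[0,1]`. -/
def Predictor {X : Type*} (p : X → ℝ) : Prop := ∀ x, p x ∈ Set.Icc (0 : ℝ) 1

/-- `d` takes values in `[-1,1]`. -/
def Dist1 {X : Type*} (d : X → ℝ) : Prop := ∀ x, d x ∈ Set.Icc (-1 : ℝ) 1

/-- The class `[0,1]^X` of all predictors. -/
def allPred (X : Type*) : Set (X → ℝ) := {p | Predictor p}

/-- The learner `A` succeeds for target `pstar`: with probability at least `1 - δ` it outputs
a predictor whose maximum distinguishing advantage w.r.t. `pstar` over `D` is at most `ε`. -/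
def Achieves {X : Type*} (μ : PMF X) (D : Set (X → ℝ)) (ε δ : ℝ) (pstar : X → ℝ) {n : ℕ}
    (A : Learner X n) : Prop :=
  ENNReal.ofReal (1 - δ) ≤
    prob (outDist μ pstar A) {p | Predictor p ∧ dnorm μ D (p - pstar) ≤ ε}

/-- The agnostic benchmark `inf_{p' ∈ P} ‖p' - pstar‖_{μ,D}`. -/
def agTarget {X : Type*} (μ : PMF X) (P D : Set (X → ℝ)) (pstar : X → ℝ) : ℝ :=
  sInf ((fun p' => dnorm μ D (p' - pstar)) '' P)

/-- The learner `A` succeeds agnostically for target `pstar`. -/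
def AchievesAg {X : Type*} (μ : PMF X) (P D : Set (X → ℝ)) (ε δ : ℝ) (pstar : X → ℝ) {n : ℕ}
    (A : Learner X n) : Prop :=
  ENNReal.ofReal (1 - δ) ≤
    prob (outDist μ pstar A)
      {p | Predictor p ∧ dnorm μ D (p - pstar) ≤ agTarget μ P D pstar + ε}

/-- Distribution-specific realizable OI learner. -/
def DSRL {X : Type*} (μ : PMF X) (P D : Set (X → ℝ)) (ε δ : ℝ) (n : ℕ)
    (A : Learner X n) : Prop :=
  ∀ pstar ∈ P, Achieves μ D ε δ pstar A

/-- Distribution-specific agnostic OI learner. -/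
def DSAL {X : Type*} (μ : PMF X) (P D : Set (X → ℝ)) (ε δ : ℝ) (n : ℕ)
    (A : Learner X n) : Prop :=
  ∀ pstar : X → ℝ, Predictor pstar → AchievesAg μ P D ε δ pstar A

/-- Distribution-free realizable OI learner. -/
def DFRL {X : Type*} (P D : Set (X → ℝ)) (ε δ : ℝ) (n : ℕ) (A : Learner X n) : Prop :=
  ∀ μ : PMF X, DSRL μ P D ε δ n A

/-- Distribution-free agnostic OI learner. -/
def DFAL {X : Type*} (P D : Set (X → ℝ)) (ε δ : ℝ) (n : ℕ) (A : Learner X n) : Prop :=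
  ∀ μ : PMF X, DSAL μ P D ε δ n A

/-- Sample complexity of distribution-specific realizable OI. -/
def SAMPDSR {X : Type*} (μ : PMF X) (P D : Set (X → ℝ)) (ε δ : ℝ) : ℕ∞ :=
  ⨅ (n : ℕ) (_ : ∃ A : Learner X n, DSRL μ P D ε δ n A), (n : ℕ∞)

/-- Sample complexity of distribution-specific agnostic OI. -/
def SAMPDSA {X : Type*} (μ : PMF X) (P D : Set (X → ℝ)) (ε δ : ℝ) : ℕ∞ :=
  ⨅ (n : ℕ) (_ : ∃ A : Learner X n, DSAL μ P D ε δ n A), (n : ℕ∞)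

/-- Sample complexity of distribution-free realizable OI. -/
def SAMPDFR {X : Type*} (P D : Set (X → ℝ)) (ε δ : ℝ) : ℕ∞ :=
  ⨅ (n : ℕ) (_ : ∃ A : Learner X n, DFRL P D ε δ n A), (n : ℕ∞)

/-- Sample complexity of distribution-free agnostic OI. -/
def SAMPDFA {X : Type*} (P D : Set (X → ℝ)) (ε δ : ℝ) : ℕ∞ :=
  ⨅ (n : ℕ) (_ : ∃ A : Learner X n, DFAL P D ε δ n A), (n : ℕ∞)

/-- The points `x 0, …, x (n-1)` are `γ`-fat shattered by `F`. -/
def Shatters {X : Type*} (F : Set (X → ℝ)) (γ : ℝ) {n : ℕ} (x : Fin n → X) : Prop :=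
  ∃ r : Fin n → ℝ, ∀ b : Fin n → Bool, ∃ f ∈ F,
    ∀ i, γ ≤ (if b i then (1 : ℝ) else -1) * (f (x i) - r i)

/-- The `γ`-fat-shattering dimension of `F`. -/
def fatDim {X : Type*} (F : Set (X → ℝ)) (γ : ℝ) : ℕ∞ :=
  ⨆ (n : ℕ) (_ : ∃ x : Fin n → X, Shatters F γ x), (n : ℕ∞)

end OI

/-!
A cover `C` of the cube `[-1,1]^X` for the uniform distribution is a cover by balls of the
normalised `ℓ¹` norm `‖f‖_{μ,[-1,1]^X} = (1/n) ∑ₓ |f x|`, so the `ℓ¹` balls of radius `n ε` around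
the points of `C` cover the cube. Comparing volumes, `2ⁿ ≤ |C| (2 n ε)ⁿ / n!`, and
`n! ≥ (n/e)ⁿ` turns this into `|C| ≥ (1/(e ε))ⁿ`. The covering number must also be shown finite
(`elog2 ⊤` is a junk value): the cube is compact and the `ℓ¹` seminorm is dominated by the sup
norm.
-/

namespace OI

open MeasureTheory

lemma setOf_dist1_eq_pi {X : Type*} :
    {d : X → ℝ | Dist1 d} = Set.univ.pi fun _ => Set.Icc (-1) 1 := by
  ext d
  simp only [Dist1, Set.mem_ofPred_eq, Set.mem_pi, Set.mem_univ, true_implies]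

lemma isCompact_setOf_dist1 {X : Type*} : IsCompact {d : X → ℝ | Dist1 d} :=
  setOf_dist1_eq_pi ▸ isCompact_univ_pi fun _ => isCompact_Icc

lemma dist1_sign {X : Type*} (f : X → ℝ) : Dist1 fun x => (SignType.sign (f x) : ℝ) := fun x => by
  change (SignType.sign (f x) : ℝ) ∈ Set.Icc (-1) 1
  generalize SignType.sign (f x) = s
  cases s <;> norm_num

section Volume

variable {X : Type*} [Fintype X]

lemma volume_setOf_dist1 : volume {d : X → ℝ | Dist1 d} = 2 ^ Fintype.card X := by
  rw [setOf_dist1_eq_pi, volume_pi_pi]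
  norm_num

lemma volume_setOf_sum_abs_sub_le [Nonempty X] (c : X → ℝ) {r : ℝ} (hr : 0 ≤ r) :
    volume {f : X → ℝ | ∑ x, |f x - c x| ≤ r}
      = ENNReal.ofReal ((2 * r) ^ Fintype.card X / (Fintype.card X).factorial) := by
  have hball := volume_sum_rpow_le (ι := X) le_rfl r
  simp only [Real.rpow_one, div_one] at hball
  have htrans : {f : X → ℝ | ∑ x, |f x - c x| ≤ r}
      = (· + -c) ⁻¹' {f : X → ℝ | ∑ x, |f x| ≤ r} := by
    ext f
    simp [sub_eq_add_neg]
  rw [htrans, measure_preimage_add_right, hball, ← ENNReal.ofReal_pow hr,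
    ← ENNReal.ofReal_mul (by positivity), one_add_one_eq_two, Real.Gamma_two,
    Real.Gamma_nat_eq_factorial, mul_one, mul_pow]
  ring_nf

theorem factorial_le_card_mul_pow_of_subset_biUnion [Nonempty X] (F : Finset (X → ℝ))
    {r : ℝ} (hr : 0 ≤ r)
    (hF : {d : X → ℝ | Dist1 d} ⊆ ⋃ c ∈ F, {f : X → ℝ | ∑ x, |f x - c x| ≤ r}) :
    ((Fintype.card X).factorial : ℝ) ≤ F.card * r ^ Fintype.card X := by
  set n := Fintype.card X
  have hvol : ENNReal.ofReal (2 ^ n) ≤ ENNReal.ofReal (F.card * ((2 * r) ^ n / n.factorial)) :=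
    calc ENNReal.ofReal (2 ^ n) = volume {d : X → ℝ | Dist1 d} := by
          rw [volume_setOf_dist1, ENNReal.ofReal_pow zero_le_two, ENNReal.ofReal_ofNat]
      _ ≤ ∑ c ∈ F, volume {f : X → ℝ | ∑ x, |f x - c x| ≤ r} :=
          (measure_mono hF).trans (measure_biUnion_finset_le _ _)
      _ = ENNReal.ofReal (F.card * ((2 * r) ^ n / n.factorial)) := by
          simp only [volume_setOf_sum_abs_sub_le _ hr, Finset.sum_const, nsmul_eq_mul]
          rw [ENNReal.ofReal_mul (by positivity), ENNReal.ofReal_natCast]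
  have h2r := (ENNReal.ofReal_le_ofReal_iff (by positivity)).mp hvol
  rw [mul_pow, mul_div_assoc', le_div_iff₀ (by positivity), mul_left_comm] at h2r
  exact le_of_mul_le_mul_left h2r (by positivity)

end Volume

lemma div_exp_one_pow_le_factorial (n : ℕ) : ((n : ℝ) / Real.exp 1) ^ n ≤ n.factorial := by
  rw [div_pow, ← Real.exp_nat_mul, mul_one, div_le_iff₀ (Real.exp_pos _)]
  exact (div_le_iff₀' (by positivity)).mp (Real.pow_div_factorial_le_exp _ (Nat.cast_nonneg n) n)

section Uniform

variable {X : Type*} [Fintype X] [Nonempty X]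

lemma pexp_uniformOfFintype (f : X → ℝ) :
    pexp (PMF.uniformOfFintype X) f = (∑ x, f x) / Fintype.card X := by
  simp only [pexp, tsum_fintype, PMF.uniformOfFintype_apply, ENNReal.toReal_inv,
    ENNReal.toReal_natCast, Finset.sum_div, inv_mul_eq_div]

lemma abs_inn_uniformOfFintype_le {g : X → ℝ} (hg : Dist1 g) (f : X → ℝ) :
    |inn (PMF.uniformOfFintype X) f g| ≤ (∑ x, |f x|) / Fintype.card X := by
  rw [inn, pexp_uniformOfFintype, abs_div, Nat.abs_cast]
  gcongr
  calc |∑ x, f x * g x| ≤ ∑ x, |f x * g x| := Finset.abs_sum_le_sum_abs _ _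
    _ ≤ ∑ x, |f x| := Finset.sum_le_sum fun x _ => by
        rw [abs_mul]
        exact mul_le_of_le_one_right (abs_nonneg _) (abs_le.mpr (hg x))

lemma inn_uniformOfFintype_sign (f : X → ℝ) :
    inn (PMF.uniformOfFintype X) f (fun x => (SignType.sign (f x) : ℝ))
      = (∑ x, |f x|) / Fintype.card X := by
  simp only [inn, pexp_uniformOfFintype, self_mul_sign]

theorem dnorm_uniformOfFintype_dist1 (f : X → ℝ) :
    dnorm (PMF.uniformOfFintype X) {d | Dist1 d} f = (∑ x, |f x|) / Fintype.card X := by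
  refine IsGreatest.csSup_eq ⟨⟨_, dist1_sign f, ?_⟩, ?_⟩
  · change |inn _ f _| = _
    rw [inn_uniformOfFintype_sign, abs_of_nonneg (by positivity)]
  · rintro _ ⟨g, hg, rfl⟩
    exact abs_inn_uniformOfFintype_le hg f

lemma dnorm_uniformOfFintype_dist1_le_norm (f : X → ℝ) :
    dnorm (PMF.uniformOfFintype X) {d | Dist1 d} f ≤ ‖f‖ := by
  rw [dnorm_uniformOfFintype_dist1, div_le_iff₀ (by simp [Fintype.card_pos])]
  calc ∑ x, |f x| ≤ ∑ _x : X, ‖f‖ := Finset.sum_le_sum fun x _ => norm_le_pi_norm f x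
    _ = ‖f‖ * Fintype.card X := by simp [mul_comm]

lemma exists_finite_isCover_dist1 {ε : ℝ} (hε : 0 < ε) :
    ∃ C, IsCover (PMF.uniformOfFintype X) {d | Dist1 d} {d | Dist1 d} ε C ∧ C.Finite := by
  obtain ⟨C, hCsub, hCfin, hcover⟩ :=
    finite_cover_balls_of_compact (X := X → ℝ) isCompact_setOf_dist1 hε
  refine ⟨C, ⟨hCsub, fun g hg => ?_⟩, hCfin⟩
  obtain ⟨c, hc, hgc⟩ := Set.mem_iUnion₂.mp (hcover hg)
  exact ⟨c, hc, (dnorm_uniformOfFintype_dist1_le_norm _).trans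
    (by rw [← dist_eq_norm]; exact (Metric.mem_ball.mp hgc).le)⟩

lemma exists_finset_isCover_card_eq_covN {ε : ℝ} (hε : 0 < ε) :
    ∃ F : Finset (X → ℝ), IsCover (PMF.uniformOfFintype X) {d | Dist1 d} {d | Dist1 d} ε F ∧
      (F.card : ℕ∞) = covN (PMF.uniformOfFintype X) {d | Dist1 d} {d | Dist1 d} ε := by
  obtain ⟨C₀, hC₀, hC₀fin⟩ := exists_finite_isCover_dist1 (X := X) hε
  have : Nonempty
      {C : Set (X → ℝ) // IsCover (PMF.uniformOfFintype X) {d | Dist1 d} {d | Dist1 d} ε C} :=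
    ⟨⟨C₀, hC₀⟩⟩
  obtain ⟨⟨C, hC⟩, hCmin⟩ := ENat.exists_eq_iInf fun C :
    {C : Set (X → ℝ) // IsCover (PMF.uniformOfFintype X) {d | Dist1 d} {d | Dist1 d} ε C} =>
      C.1.encard
  simp only [iInf_subtype] at hCmin
  have hCfin : C.Finite := Set.encard_lt_top_iff.mp <|
    hCmin ▸ (iInf₂_le C₀ hC₀).trans_lt hC₀fin.encard_lt_top
  refine ⟨hCfin.toFinset, by simpa using hC, ?_⟩
  rw [covN, ← hCmin, hCfin.encard_eq_coe_toFinset_card]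

theorem one_div_exp_one_mul_pow_le_card_of_isCover {ε : ℝ} (hε : 0 < ε)
    {F : Finset (X → ℝ)}
    (hF : IsCover (PMF.uniformOfFintype X) {d | Dist1 d} {d | Dist1 d} ε F) :
    (1 / (Real.exp 1 * ε)) ^ Fintype.card X ≤ F.card := by
  set n := Fintype.card X
  have hn : (0 : ℝ) < n := by exact_mod_cast Fintype.card_pos
  have hballs : {d : X → ℝ | Dist1 d} ⊆ ⋃ c ∈ F, {f : X → ℝ | ∑ x, |f x - c x| ≤ n * ε} := by
    intro g hg
    obtain ⟨c, hc, hgc⟩ := hF.2 g hg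
    rw [dnorm_uniformOfFintype_dist1, div_le_iff₀ hn] at hgc
    exact Set.mem_biUnion hc (by simpa [mul_comm] using hgc)
  calc (1 / (Real.exp 1 * ε)) ^ n = (n / Real.exp 1) ^ n / (n * ε) ^ n := by
        rw [← div_pow]
        field_simp
    _ ≤ (n.factorial : ℝ) / (n * ε) ^ n := by gcongr; exact div_exp_one_pow_le_factorial n
    _ ≤ F.card := by
        rw [div_le_iff₀ (by positivity)]
        exact factorial_le_card_mul_pow_of_subset_biUnion F (by positivity) hballs

end Uniform

end OI

open OI

theorem statement_19_general {X : Type} [Fintype X] [Nonempty X] (n : ℕ)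
    (hcard : Fintype.card X = n) (ε : ℝ)
    (hε : ε ∈ Set.Ioo (0 : ℝ) (Real.exp 1)⁻¹) :
    (n : ℝ) * Real.logb 2 (1 / (Real.exp 1 * ε)) ≤
      elog2 (covN (PMF.uniformOfFintype X)
        {d : X → ℝ | Dist1 d} {d : X → ℝ | Dist1 d} ε) := by
  obtain ⟨hε0, -⟩ := hε
  obtain ⟨F, hF, hFcard⟩ := exists_finset_isCover_card_eq_covN (X := X) hε0
  have hbound := hcard ▸ one_div_exp_one_mul_pow_le_card_of_isCover hε0 hF
  have hpos : 0 < (1 / (Real.exp 1 * ε)) ^ n := by positivity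
  calc (n : ℝ) * Real.logb 2 (1 / (Real.exp 1 * ε))
      = Real.logb 2 ((1 / (Real.exp 1 * ε)) ^ n) := (Real.logb_pow _ _ _).symm
    _ ≤ Real.logb 2 F.card := Real.logb_le_logb_of_le one_lt_two hpos hbound
    _ = elog2 (covN (PMF.uniformOfFintype X) {d | Dist1 d} {d | Dist1 d} ε) := by
        rw [elog2, ← hFcard, ENat.toNat_natCast]

/-- for `μ` uniform over a finite set `X` of size `n ≥ 1` and `ε ∈ (0, 1/e)`,
`log N_{μ,[−1,1]^X}([−1,1]^X, ε) ≥ n · log(1/(eε))`. -/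
theorem statement_19 {X : Type} [Fintype X] [Nonempty X] (n : ℕ)
    (hcard : Fintype.card X = n) (hn : 1 ≤ n) (ε : ℝ)
    (hε : ε ∈ Set.Ioo (0 : ℝ) (Real.exp 1)⁻¹) :
    (n : ℝ) * Real.logb 2 (1 / (Real.exp 1 * ε)) ≤
      elog2 (covN (PMF.uniformOfFintype X)
        {d : X → ℝ | Dist1 d} {d : X → ℝ | Dist1 d} ε) :=
  statement_19_general n hcard ε hε
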